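/- arXiv:1903.03826 — 2 statements merged into one kernel-verified Lean document; each statement's English description precedes it below -/
import Mathlib

section
/- For every R ∈ SO(3) there exist θ ∈ [0, 2π] and a unit vector v ∈ ℝ³ such that R = I₃ + sin(θ)·v̂ + (1−cos(θ))·v̂². -/
open Matrix Polynomial

noncomputable section

/-- The hat map sending `x ∈ ℝ³` to the skew-symmetric matrix `x̂` with `x̂ y = x × y`. -/
def hat (x : Fin 3 → ℝ) : Matrix (Fin 3) (Fin 3) ℝ :=
  !![0, -x 2, x 1; x 2, 0, -x 0; -x 1, x 0, 0]

/-- The vee map, inverse of the hat map on skew-symmetric `3 × 3` matrices. -/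
def vee (A : Matrix (Fin 3) (Fin 3) ℝ) : Fin 3 → ℝ :=
  ![A 2 1, A 0 2, A 1 0]

/-- `SO3 R` iff `R` is a rotation matrix: `RᵀR = I₃` and `det R = 1`. -/
def SO3 (R : Matrix (Fin 3) (Fin 3) ℝ) : Prop :=
  Rᵀ * R = 1 ∧ R.det = 1

/-- Frobenius inner product `⟨A,B⟩ = tr(AᵀB)`. -/
def finner (A B : Matrix (Fin 3) (Fin 3) ℝ) : ℝ := (Aᵀ * B).trace

/-- Frobenius norm `‖A‖ = √⟨A,A⟩`. -/
def fnorm (A : Matrix (Fin 3) (Fin 3) ℝ) : ℝ := Real.sqrt (finner A A)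

/-- Euclidean norm of a vector. -/
def vnorm {k : ℕ} (x : Fin k → ℝ) : ℝ := Real.sqrt (x ⬝ᵥ x)

/-- Third standard basis vector `e₃ = (0,0,1)` of `ℝ³`. -/
def e3 : Fin 3 → ℝ := ![0, 0, 1]

/-!
Let `T = tr R` and `w = vee (R - Rᵀ)`, so that `ŵ = R - Rᵀ`. Since `adj R = Rᵀ`, Cayley–Hamilton
for `3 × 3` matrices reads `R² = Rᵀ + T R - T`, whence `ŵ² = R² + Rᵀ² - 2 = (T + 1)(R + Rᵀ - 2)`.
Comparing with `ŵ² = w wᵀ - |w|²` and taking traces gives `|w|² = (3 - T)(T + 1)`, so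
`-1 ≤ T ≤ 3`. If `T ≠ -1`, put `cos θ = (T - 1)/2` with `θ ∈ [0, π]`; then `|w| = 2 sin θ`,
`w = 2 sin θ v` for a unit `v`, and dividing by `T + 1` recovers the symmetric part of `R`, which is
Rodrigues' formula. If `T = -1`, then `w = 0`, `R` is symmetric and `adj (R + 1) = 0`, so
`(R + 1)/2` is a symmetric matrix of rank one and trace one, i.e. `v vᵀ` for a unit `v`: this is
Rodrigues' formula with `θ = π`.
-/

open Real

theorem hat_mul_hat (v : Fin 3 → ℝ) : hat v * hat v = vecMulVec v v - (v ⬝ᵥ v) • 1 := by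
  ext i j
  fin_cases i <;> fin_cases j <;>
    simp [hat, mul_apply, Fin.sum_univ_three, vecMulVec_apply, dotProduct, one_apply] <;> ring

theorem hat_smul (r : ℝ) (v : Fin 3 → ℝ) : hat (r • v) = r • hat v := by
  ext i j
  fin_cases i <;> fin_cases j <;> simp [hat]

theorem hat_vee_sub_transpose (A : Matrix (Fin 3) (Fin 3) ℝ) : hat (vee (A - Aᵀ)) = A - Aᵀ := by
  ext i j
  fin_cases i <;> fin_cases j <;> simp [hat, vee]

theorem rodrigues_formula_eq_vecMulVec {v : Fin 3 → ℝ} (hv : v ⬝ᵥ v = 1) (θ : ℝ) :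
    1 + sin θ • hat v + (1 - cos θ) • (hat v * hat v) =
      cos θ • 1 + sin θ • hat v + (1 - cos θ) • vecMulVec v v := by
  rw [hat_mul_hat, hv]
  module

theorem exists_dotProduct_self_eq_one_and_eq_smul {w : Fin 3 → ℝ} {r : ℝ} (hr : 0 ≤ r)
    (hw : w ⬝ᵥ w = r ^ 2) : ∃ v : Fin 3 → ℝ, v ⬝ᵥ v = 1 ∧ w = r • v := by
  rcases hr.eq_or_lt with rfl | hr
  · refine ⟨e3, by simp [e3, dotProduct, Fin.sum_univ_three], ?_⟩
    rw [zero_smul, ← dotProduct_self_eq_zero, hw, sq, zero_mul]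
  · refine ⟨r⁻¹ • w, ?_, by rw [smul_smul, mul_inv_cancel₀ hr.ne', one_smul]⟩
    rw [smul_dotProduct, dotProduct_smul, hw, smul_eq_mul, smul_eq_mul]
    field_simp

namespace Matrix

variable {α : Type*} [CommRing α]

theorem adjugate_fin_three_eq_mul_self_sub (A : Matrix (Fin 3) (Fin 3) α) :
    A.adjugate = A * A - A.trace • A + A.adjugate.trace • 1 := by
  ext i j
  fin_cases i <;> fin_cases j <;>
    simp [adjugate_fin_three, trace_fin_three, mul_apply, Fin.sum_univ_three] <;> ring

theorem adjugate_add_one_fin_three (A : Matrix (Fin 3) (Fin 3) α) :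
    (A + 1).adjugate = A.adjugate + (A.trace + 1) • 1 - A := by
  ext i j
  fin_cases i <;> fin_cases j <;> simp [adjugate_fin_three, trace_fin_three] <;> ring

theorem mul_eq_mul_of_adjugate_eq_zero {P : Matrix (Fin 3) (Fin 3) α} (hP : Pᵀ = P)
    (hadj : P.adjugate = 0) (i j k : Fin 3) : P i i * P j k = P i j * P i k := by
  rw [adjugate_fin_three, ← Matrix.ext_iff] at hadj
  rw [← Matrix.ext_iff] at hP
  simp only [of_apply, cons_val', cons_val_fin_one, Matrix.zero_apply, Fin.forall_fin_succ,
    cons_val_zero, cons_val_succ, transpose_apply, Fin.succ_zero_eq_one, Fin.succ_one_eq_two,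
    IsEmpty.forall_iff, and_true] at hadj hP
  fin_cases i <;> fin_cases j <;> fin_cases k <;> grind

theorem exists_eq_vecMulVec_of_adjugate_eq_zero {P : Matrix (Fin 3) (Fin 3) ℝ} (hP : Pᵀ = P)
    (hadj : P.adjugate = 0) (htr : P.trace = 1) :
    ∃ v : Fin 3 → ℝ, v ⬝ᵥ v = 1 ∧ P = vecMulVec v v := by
  obtain ⟨i, hi⟩ : ∃ i, 0 < P i i := by
    by_contra! h
    rw [trace_fin_three] at htr
    linarith [h 0, h 1, h 2]
  have hminor := mul_eq_mul_of_adjugate_eq_zero hP hadj i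
  refine ⟨(√(P i i))⁻¹ • P i, ?_, ?_⟩
  · rw [smul_dotProduct, dotProduct_smul, smul_eq_mul, smul_eq_mul, ← mul_assoc, ← mul_inv,
      Real.mul_self_sqrt hi.le]
    have hrow : P i ⬝ᵥ P i = P i i * P.trace := by
      simp only [dotProduct, trace, diag, Finset.mul_sum, ← hminor]
    rw [hrow, htr]
    field_simp
  · ext j k
    rw [smul_vecMulVec, vecMulVec_smul, smul_smul, Matrix.smul_apply, vecMulVec_apply, ← mul_inv,
      Real.mul_self_sqrt hi.le, smul_eq_mul, ← hminor]
    field_simp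

end Matrix

namespace SO3

variable {R : Matrix (Fin 3) (Fin 3) ℝ}

theorem mul_transpose (hR : SO3 R) : R * Rᵀ = 1 := mul_eq_one_comm.mp hR.1

theorem adjugate_eq_transpose (hR : SO3 R) : R.adjugate = Rᵀ :=
  calc R.adjugate = R.adjugate * (R * Rᵀ) := by rw [hR.mul_transpose, mul_one]
    _ = Rᵀ := by rw [← mul_assoc, adjugate_mul, hR.2, one_smul, one_mul]

theorem mul_self_eq (hR : SO3 R) : R * R = Rᵀ + R.trace • R - R.trace • 1 := by
  have h := adjugate_fin_three_eq_mul_self_sub R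
  rw [hR.adjugate_eq_transpose, trace_transpose] at h
  rw [h]
  abel

theorem hat_axial_mul_self (hR : SO3 R) :
    hat (vee (R - Rᵀ)) * hat (vee (R - Rᵀ)) = (R.trace + 1) • (R + Rᵀ - (2 : ℝ) • 1) := by
  have hT : Rᵀ * Rᵀ = R + R.trace • Rᵀ - R.trace • 1 := by
    rw [← transpose_mul, hR.mul_self_eq]
    simp
  calc hat (vee (R - Rᵀ)) * hat (vee (R - Rᵀ)) = R * R + Rᵀ * Rᵀ - R * Rᵀ - Rᵀ * R := by
        rw [hat_vee_sub_transpose]; noncomm_ring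
    _ = (R.trace + 1) • (R + Rᵀ - (2 : ℝ) • 1) := by
        rw [hR.mul_self_eq, hT, hR.mul_transpose, hR.1]; module

theorem axial_dotProduct_self (hR : SO3 R) :
    vee (R - Rᵀ) ⬝ᵥ vee (R - Rᵀ) = (3 - R.trace) * (R.trace + 1) := by
  have h := congrArg trace hR.hat_axial_mul_self
  rw [hat_mul_hat] at h
  simp only [trace_sub, trace_vecMulVec, trace_smul, trace_one, Fintype.card_fin, Nat.cast_ofNat,
    smul_eq_mul, trace_add, trace_transpose] at h
  linarith

theorem exists_eq_rodrigues_of_trace_ne_neg_one (hR : SO3 R) (hT : R.trace ≠ -1) :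
    ∃ θ ∈ Set.Icc 0 π, ∃ v : Fin 3 → ℝ, v ⬝ᵥ v = 1 ∧
      R = cos θ • 1 + sin θ • hat v + (1 - cos θ) • vecMulVec v v := by
  have hw := hR.axial_dotProduct_self
  set T := R.trace
  have hT_mem : -1 < T ∧ T ≤ 3 := by
    have : 0 ≤ vee (R - Rᵀ) ⬝ᵥ vee (R - Rᵀ) := Finset.sum_nonneg fun i _ => mul_self_nonneg _
    rcases lt_or_gt_of_ne hT with h | h
    · nlinarith
    · constructor <;> nlinarith
  set θ := arccos ((T - 1) / 2)
  have hcos : cos θ = (T - 1) / 2 := cos_arccos (by linarith) (by linarith)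
  have hsin : 0 ≤ sin θ := sin_arccos _ ▸ sqrt_nonneg _
  obtain ⟨v, hv, hwv⟩ := exists_dotProduct_self_eq_one_and_eq_smul (r := 2 * sin θ)
    (by positivity) (by rw [hw, mul_pow, sin_sq, hcos]; ring)
  refine ⟨θ, ⟨arccos_nonneg _, arccos_le_pi _⟩, v, hv, ?_⟩
  have hskew : R - Rᵀ = (2 * sin θ) • hat v := by
    rw [← hat_vee_sub_transpose, hwv, hat_smul]
  have hsymm : R + Rᵀ = (2 * cos θ) • 1 + (2 * (1 - cos θ)) • vecMulVec v v := by
    have h := hR.hat_axial_mul_self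
    rw [hat_mul_hat, hw, hwv, smul_vecMulVec, vecMulVec_smul, smul_smul] at h
    refine smul_right_injective _ (show T + 1 ≠ 0 by linarith) ?_
    have hsin_sq : 2 * sin θ * (2 * sin θ) = (T + 1) * (2 * (1 - cos θ)) := by
      rw [← sq, mul_pow, sin_sq, hcos]; ring
    rw [hcos] at hsin_sq ⊢
    linear_combination (norm := module) -h + hsin_sq • vecMulVec v v
  linear_combination (norm := module) (1 / 2 : ℝ) • (hsymm + hskew)

theorem exists_eq_two_smul_vecMulVec_sub_one_of_trace_eq_neg_one (hR : SO3 R)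
    (hT : R.trace = -1) : ∃ v : Fin 3 → ℝ, v ⬝ᵥ v = 1 ∧ R = (2 : ℝ) • vecMulVec v v - 1 := by
  have hw : vee (R - Rᵀ) = 0 :=
    dotProduct_self_eq_zero.mp (by rw [hR.axial_dotProduct_self, hT]; ring)
  have hsymm : Rᵀ = R := by
    have h := hat_vee_sub_transpose R
    rw [hw, ← zero_smul ℝ 0, hat_smul, zero_smul] at h
    exact (sub_eq_zero.mp h.symm).symm
  set P := (2 : ℝ)⁻¹ • (R + 1) with hP
  have hPsymm : Pᵀ = P := by rw [hP, transpose_smul, transpose_add, hsymm, transpose_one]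
  have hPadj : P.adjugate = 0 := by
    rw [hP, adjugate_smul, adjugate_add_one_fin_three, hR.adjugate_eq_transpose, hsymm, hT]
    simp
  have hPtr : P.trace = 1 := by
    rw [hP, trace_smul, trace_add, hT, trace_one]
    norm_num
  obtain ⟨v, hv, hPv⟩ := exists_eq_vecMulVec_of_adjugate_eq_zero hPsymm hPadj hPtr
  refine ⟨v, hv, ?_⟩
  rw [← hPv, hP]
  module

end SO3

/-- every `R ∈ SO(3)` has a Rodrigues (axis–angle) representation with
`θ ∈ [0, 2π]` and a unit axis `v`. -/
theorem stmt_1 (R : Matrix (Fin 3) (Fin 3) ℝ) (hR : SO3 R) :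
    ∃ θ ∈ Set.Icc (0 : ℝ) (2 * Real.pi), ∃ v : Fin 3 → ℝ, v ⬝ᵥ v = 1 ∧
      R = 1 + Real.sin θ • hat v + (1 - Real.cos θ) • (hat v * hat v) := by
  rcases eq_or_ne R.trace (-1) with hT | hT
  · obtain ⟨v, hv, hRv⟩ := hR.exists_eq_two_smul_vecMulVec_sub_one_of_trace_eq_neg_one hT
    refine ⟨π, ⟨pi_pos.le, by linarith [pi_pos]⟩, v, hv, ?_⟩
    rw [rodrigues_formula_eq_vecMulVec hv, hRv, cos_pi, sin_pi]
    module
  · obtain ⟨θ, hθ, v, hv, hRv⟩ := hR.exists_eq_rodrigues_of_trace_ne_neg_one hT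
    refine ⟨θ, ⟨hθ.1, hθ.2.trans (by linarith [pi_pos])⟩, v, hv, ?_⟩
    rw [rodrigues_formula_eq_vecMulVec hv, hRv]
end
end

section
/- Let G be a real symmetric positive-semidefinite 3×3 matrix with eigenvalues λ₁ ≤ λ₂ ≤ λ₃, and let R, R̄ ∈ SO(3). Set E_R = R − R̄, c₁ = λ₁+λ₂ = tr(G) − λ₃, c₂ = λ₂+λ₃ = tr(G) − λ₁, and e_R = (RᵀGR̄ − R̄ᵀGR)^∨. Then ½·c₁²·(1 − ‖E_R‖²/8)·‖E_R‖² ≤ ‖e_R‖² ≤ ½·c₂²·‖E_R‖². -/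
open Matrix Polynomial

noncomputable section

/-! Diagonalising `G = U D Uᵀ` and conjugating by `U` and `R̄` reduces everything to the rotation
`Z = Uᵀ R R̄ᵀ U`: `‖R − R̄‖ = ‖Z − 1‖` and `‖e_R‖ = ‖(ZᵀD − DZ)^∨‖`. If `q` is a unit quaternion
of `Z`, then `‖Z − 1‖² = 8 (1 − q₀²)` and `‖(ZᵀD − DZ)^∨‖² = 4 ∑ (dᵢ ± dⱼ)² qₐ² q_b²`, the sign
being `+` exactly for the pairs `{a, b}` containing `0`. The pair sums `dᵢ + dⱼ = tr G − dₖ` lie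
in `[c₁, c₂]` and, as `D ≥ 0`, `|dᵢ − dⱼ| ≤ c₂`; with `∑ qₐ² = 1` this gives both bounds. The
squares `qₐ²` are polynomials in the entries of `Z`, so `q` itself is never needed. -/

lemma mul_mul_cancel_of_mul_eq_one {M : Type*} [Monoid M] {a b : M} (h : a * b = 1) (x : M) :
    a * (b * x) = x := by
  rw [← mul_assoc, h, one_mul]

lemma fnorm_sq (A : Matrix (Fin 3) (Fin 3) ℝ) : fnorm A ^ 2 = ∑ i, ∑ j, A i j ^ 2 := by
  have h : finner A A = ∑ i, ∑ j, A i j ^ 2 := by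
    simp only [finner, trace, diag_apply, mul_apply, transpose_apply, sq]
    exact Finset.sum_comm
  rw [fnorm, h, Real.sq_sqrt (by positivity)]

lemma vnorm_sq {k : ℕ} (x : Fin k → ℝ) : vnorm x ^ 2 = x ⬝ᵥ x :=
  Real.sq_sqrt (Finset.sum_nonneg fun i _ => mul_self_nonneg (x i))

lemma fnorm_orthogonal_mul {V : Matrix (Fin 3) (Fin 3) ℝ} (hV : Vᵀ * V = 1)
    (A : Matrix (Fin 3) (Fin 3) ℝ) : fnorm (V * A) = fnorm A := by
  rw [fnorm, fnorm, finner, finner, transpose_mul, Matrix.mul_assoc, ← Matrix.mul_assoc Vᵀ, hV,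
    Matrix.one_mul]

lemma fnorm_mul_orthogonal {V : Matrix (Fin 3) (Fin 3) ℝ} (hV : V * Vᵀ = 1)
    (A : Matrix (Fin 3) (Fin 3) ℝ) : fnorm (A * V) = fnorm A := by
  rw [fnorm, fnorm, finner, finner, transpose_mul, Matrix.mul_assoc, trace_mul_comm,
    Matrix.mul_assoc, Matrix.mul_assoc, hV, Matrix.mul_one]

lemma two_mul_vnorm_vee_sq {K : Matrix (Fin 3) (Fin 3) ℝ} (hK : Kᵀ = -K) :
    2 * vnorm (vee K) ^ 2 = fnorm K ^ 2 := by
  have h : ∀ i j, K j i = -K i j := fun i j => by simpa using congrFun (congrFun hK i) j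
  have h00 : K 0 0 = 0 := by linarith [h 0 0]
  have h11 : K 1 1 = 0 := by linarith [h 1 1]
  have h22 : K 2 2 = 0 := by linarith [h 2 2]
  rw [vnorm_sq, fnorm_sq]
  simp only [vee, dotProduct, Fin.sum_univ_three, Matrix.cons_val_zero, Matrix.cons_val_one,
    Matrix.cons_val_two, Matrix.head_cons, Matrix.tail_cons]
  rw [h 1 0, h 2 0, h 2 1, h00, h11, h22]
  ring

lemma vnorm_vee_conj_sq {K P : Matrix (Fin 3) (Fin 3) ℝ} (hK : Kᵀ = -K) (hP : P * Pᵀ = 1) :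
    vnorm (vee (Pᵀ * K * P)) ^ 2 = vnorm (vee K) ^ 2 := by
  have hPK : (Pᵀ * K * P)ᵀ = -(Pᵀ * K * P) := by simp [transpose_mul, hK, Matrix.mul_assoc]
  have hPt : Pᵀᵀ * Pᵀ = 1 := by rwa [transpose_transpose]
  have h := two_mul_vnorm_vee_sq hPK
  rw [fnorm_mul_orthogonal hP, fnorm_orthogonal_mul hPt, ← two_mul_vnorm_vee_sq hK] at h
  linarith

lemma sub_eq_conj_sub_one {U R S : Matrix (Fin 3) (Fin 3) ℝ} (hU : U * Uᵀ = 1)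
    (hS : Sᵀ * S = 1) : R - S = U * (Uᵀ * (R * Sᵀ) * U - 1) * (Uᵀ * S) := by
  simp only [Matrix.mul_sub, Matrix.sub_mul, Matrix.mul_assoc, mul_mul_cancel_of_mul_eq_one hU, hS,
    Matrix.mul_one]

lemma transpose_mul_mul_sub_eq_conj {U R S D : Matrix (Fin 3) (Fin 3) ℝ} (hU : U * Uᵀ = 1)
    (hS : Sᵀ * S = 1) :
    Rᵀ * (U * D * Uᵀ) * S - Sᵀ * (U * D * Uᵀ) * R =
      (Uᵀ * S)ᵀ * ((Uᵀ * (R * Sᵀ) * U)ᵀ * D - D * (Uᵀ * (R * Sᵀ) * U)) * (Uᵀ * S) := by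
  simp only [transpose_mul, transpose_transpose, Matrix.mul_sub, Matrix.sub_mul, Matrix.mul_assoc,
    mul_mul_cancel_of_mul_eq_one hU, mul_mul_cancel_of_mul_eq_one hS, hS, Matrix.mul_one]

lemma Matrix.IsHermitian.transpose_eigenvectorUnitary_mul_self {n : Type*} [Fintype n]
    [DecidableEq n] {A : Matrix n n ℝ} (hA : A.IsHermitian) :
    (hA.eigenvectorUnitary : Matrix n n ℝ)ᵀ * hA.eigenvectorUnitary = 1 := by
  simpa [star_eq_conjTranspose, conjTranspose_eq_transpose_of_trivial] using
    Unitary.coe_star_mul_self hA.eigenvectorUnitary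

lemma Matrix.IsHermitian.eq_eigenvectorUnitary_mul_diagonal_mul_transpose {n : Type*}
    [Fintype n] [DecidableEq n] {A : Matrix n n ℝ} (hA : A.IsHermitian) :
    A = hA.eigenvectorUnitary * diagonal hA.eigenvalues *
      (hA.eigenvectorUnitary : Matrix n n ℝ)ᵀ := by
  conv_lhs => rw [hA.spectral_theorem]
  simp [Unitary.conjStarAlgAut_apply, star_eq_conjTranspose,
    conjTranspose_eq_transpose_of_trivial]

lemma roots_X_sub_C_mul_X_sub_C_mul_X_sub_C {R : Type*} [CommRing R] [IsDomain R] (a b c : R) :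
    ((X - C a) * (X - C b) * (X - C c)).roots = {a, b, c} := by
  simpa [mul_assoc] using roots_multiset_prod_X_sub_C ({a, b, c} : Multiset R)

lemma mem_Icc_of_map_eq {ι : Type*} [Fintype ι] {d : ι → ℝ} {a b c : ℝ} (hab : a ≤ b)
    (hbc : b ≤ c) (h : Multiset.map d Finset.univ.val = {a, b, c}) (k : ι) :
    d k ∈ Set.Icc a c := by
  have hk : d k ∈ ({a, b, c} : Multiset ℝ) := h ▸ Multiset.mem_map_of_mem d (Finset.mem_univ k)
  simp only [Multiset.insert_eq_cons, Multiset.mem_cons, Multiset.mem_singleton] at hk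
  rcases hk with hk | hk | hk <;> constructor <;> linarith

lemma nonneg_of_mul_nonneg_of_add_pos {a b c e : ℝ} (hb : 0 ≤ a * b) (hc : 0 ≤ a * c)
    (he : 0 ≤ a * e) (hsum : 0 < a + b + c + e) : 0 ≤ a := by
  by_contra! ha
  have : b ≤ 0 := nonpos_of_mul_nonneg_right hb ha
  have : c ≤ 0 := nonpos_of_mul_nonneg_right hc ha
  have : e ≤ 0 := nonpos_of_mul_nonneg_right he ha
  linarith

/-- `quatSq Z = 4 (q₀², q₁², q₂², q₃²)` for a unit quaternion `q` representing the rotation `Z`. -/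
def quatSq (Z : Matrix (Fin 3) (Fin 3) ℝ) : Fin 4 → ℝ :=
  ![1 + Z 0 0 + Z 1 1 + Z 2 2, 1 + Z 0 0 - Z 1 1 - Z 2 2,
    1 - Z 0 0 + Z 1 1 - Z 2 2, 1 - Z 0 0 - Z 1 1 + Z 2 2]

lemma quatSq_sum (Z : Matrix (Fin 3) (Fin 3) ℝ) :
    quatSq Z 0 + quatSq Z 1 + quatSq Z 2 + quatSq Z 3 = 4 := by
  simp [quatSq]; ring

def errorQuartic (d : Fin 3 → ℝ) (w : Fin 4 → ℝ) : ℝ :=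
  ((d 1 + d 2) ^ 2 * (w 0 * w 1) + (d 2 + d 0) ^ 2 * (w 0 * w 2) + (d 0 + d 1) ^ 2 * (w 0 * w 3)
    + (d 1 - d 2) ^ 2 * (w 2 * w 3) + (d 2 - d 0) ^ 2 * (w 1 * w 3)
    + (d 0 - d 1) ^ 2 * (w 1 * w 2)) / 4

section errorQuartic

variable {w : Fin 4 → ℝ} (hw : ∀ i, 0 ≤ w i) (hsum : w 0 + w 1 + w 2 + w 3 = 4)
  {d : Fin 3 → ℝ} {c : ℝ}
include hw hsum

lemma le_errorQuartic (hc : 0 ≤ c) (hpair : ∀ k, c ≤ (∑ i, d i) - d k) :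
    c ^ 2 * w 0 * (4 - w 0) / 4 ≤ errorQuartic d w := by
  have hS := Fin.sum_univ_three d
  have h0 : c ≤ d 1 + d 2 := by linarith [hpair 0]
  have h1 : c ≤ d 2 + d 0 := by linarith [hpair 1]
  have h2 : c ≤ d 0 + d 1 := by linarith [hpair 2]
  calc c ^ 2 * w 0 * (4 - w 0) / 4
      = (c ^ 2 * (w 0 * w 1) + c ^ 2 * (w 0 * w 2) + c ^ 2 * (w 0 * w 3)) / 4 := by
        rw [show 4 - w 0 = w 1 + w 2 + w 3 by linarith]; ring
    _ ≤ ((d 1 + d 2) ^ 2 * (w 0 * w 1) + (d 2 + d 0) ^ 2 * (w 0 * w 2)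
          + (d 0 + d 1) ^ 2 * (w 0 * w 3)) / 4 := by
        gcongr <;> exact mul_nonneg (hw 0) (hw _)
    _ ≤ errorQuartic d w := by
        rw [errorQuartic]
        gcongr ?_ / 4
        linarith [mul_nonneg (sq_nonneg (d 1 - d 2)) (mul_nonneg (hw 2) (hw 3)),
          mul_nonneg (sq_nonneg (d 2 - d 0)) (mul_nonneg (hw 1) (hw 3)),
          mul_nonneg (sq_nonneg (d 0 - d 1)) (mul_nonneg (hw 1) (hw 2))]

lemma errorQuartic_le (hd : ∀ k, 0 ≤ d k) (hpair : ∀ k, (∑ i, d i) - d k ≤ c) :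
    errorQuartic d w ≤ c ^ 2 * (4 - w 0) := by
  have hS := Fin.sum_univ_three d
  have h0 : d 1 + d 2 ≤ c := by linarith [hpair 0]
  have h1 : d 2 + d 0 ≤ c := by linarith [hpair 1]
  have h2 : d 0 + d 1 ≤ c := by linarith [hpair 2]
  have := hd 0; have := hd 1; have := hd 2
  have := hw 0; have := hw 1; have := hw 2; have := hw 3
  have hpairs : (w 0 * w 1 + w 0 * w 2 + w 0 * w 3 + w 2 * w 3 + w 1 * w 3 + w 1 * w 2) / 4
      ≤ 4 - w 0 := by
    have : 0 ≤ w 1 ^ 2 + w 2 ^ 2 + w 3 ^ 2 + w 1 * w 2 + w 1 * w 3 + w 2 * w 3 := by positivity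
    nlinarith
  calc errorQuartic d w
      ≤ (c ^ 2 * (w 0 * w 1) + c ^ 2 * (w 0 * w 2) + c ^ 2 * (w 0 * w 3)
          + c ^ 2 * (w 2 * w 3) + c ^ 2 * (w 1 * w 3) + c ^ 2 * (w 1 * w 2)) / 4 := by
        rw [errorQuartic]
        gcongr (?_ * _ + ?_ * _ + ?_ * _ + ?_ * _ + ?_ * _ + ?_ * _) / 4
        all_goals exact sq_le_sq' (by linarith) (by linarith)
    _ = c ^ 2 * ((w 0 * w 1 + w 0 * w 2 + w 0 * w 3 + w 2 * w 3 + w 1 * w 3 + w 1 * w 2) / 4) := by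
        ring
    _ ≤ c ^ 2 * (4 - w 0) := by gcongr

end errorQuartic

namespace SO3

variable {Z : Matrix (Fin 3) (Fin 3) ℝ}

lemma mul_transpose_s6 (hZ : SO3 Z) : Z * Zᵀ = 1 := mul_eq_one_comm.mp hZ.1

lemma mul_transpose_of {R S : Matrix (Fin 3) (Fin 3) ℝ} (hR : SO3 R) (hS : SO3 S) :
    SO3 (R * Sᵀ) := by
  refine ⟨?_, ?_⟩
  · rw [transpose_mul, transpose_transpose, Matrix.mul_assoc, ← Matrix.mul_assoc Rᵀ, hR.1,
      Matrix.one_mul, hS.mul_transpose_s6]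
  · rw [det_mul, det_transpose, hR.2, hS.2, one_mul]

lemma conj {U : Matrix (Fin 3) (Fin 3) ℝ} (hZ : SO3 Z) (hU : Uᵀ * U = 1) : SO3 (Uᵀ * Z * U) := by
  have hUUt : U * Uᵀ = 1 := mul_eq_one_comm.mp hU
  refine ⟨?_, ?_⟩
  · simp only [transpose_mul, transpose_transpose, Matrix.mul_assoc,
      mul_mul_cancel_of_mul_eq_one hUUt, mul_mul_cancel_of_mul_eq_one hZ.1, hU]
  · have hdet : U.det * U.det = 1 := by simpa [det_transpose] using congrArg det hU
    rw [det_mul, det_mul, det_transpose, hZ.2]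
    linear_combination hdet

lemma row_sq_sum (hZ : SO3 Z) (i : Fin 3) : Z i 0 ^ 2 + Z i 1 ^ 2 + Z i 2 ^ 2 = 1 := by
  simpa [mul_apply, Fin.sum_univ_three, sq] using congrFun (congrFun hZ.mul_transpose_s6 i) i

lemma col_sq_sum (hZ : SO3 Z) (j : Fin 3) : Z 0 j ^ 2 + Z 1 j ^ 2 + Z 2 j ^ 2 = 1 := by
  simpa [mul_apply, Fin.sum_univ_three, sq] using congrFun (congrFun hZ.1 j) j

lemma adjugate_eq_transpose_s6 (hZ : SO3 Z) : Z.adjugate = Zᵀ := by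
  calc Z.adjugate = Z.adjugate * Z * Zᵀ := by rw [Matrix.mul_assoc, hZ.mul_transpose_s6, mul_one]
    _ = Zᵀ := by rw [adjugate_mul, hZ.2, one_smul, Matrix.one_mul]

lemma diag_eq_cofactor (hZ : SO3 Z) :
    Z 0 0 = Z 1 1 * Z 2 2 - Z 1 2 * Z 2 1 ∧ Z 1 1 = Z 0 0 * Z 2 2 - Z 0 2 * Z 2 0 ∧
      Z 2 2 = Z 0 0 * Z 1 1 - Z 0 1 * Z 1 0 := by
  have h := hZ.adjugate_eq_transpose_s6
  rw [adjugate_fin_three] at h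
  refine ⟨?_, ?_, ?_⟩
  · simpa using (congrFun (congrFun h 0) 0).symm
  · simpa using (congrFun (congrFun h 1) 1).symm
  · simpa using (congrFun (congrFun h 2) 2).symm

lemma quatSq_mul_quatSq (hZ : SO3 Z) :
    quatSq Z 0 * quatSq Z 1 = (Z 2 1 - Z 1 2) ^ 2 ∧
      quatSq Z 0 * quatSq Z 2 = (Z 0 2 - Z 2 0) ^ 2 ∧
      quatSq Z 0 * quatSq Z 3 = (Z 1 0 - Z 0 1) ^ 2 ∧
      quatSq Z 2 * quatSq Z 3 = (Z 1 2 + Z 2 1) ^ 2 ∧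
      quatSq Z 1 * quatSq Z 3 = (Z 2 0 + Z 0 2) ^ 2 ∧
      quatSq Z 1 * quatSq Z 2 = (Z 0 1 + Z 1 0) ^ 2 := by
  obtain ⟨c0, c1, c2⟩ := hZ.diag_eq_cofactor
  have r := hZ.row_sq_sum
  have c := hZ.col_sq_sum
  simp only [quatSq, Matrix.cons_val]
  refine ⟨?_, ?_, ?_, ?_, ?_, ?_⟩
  · linear_combination 2 * c0 - r 1 - r 2 + c 0
  · linear_combination 2 * c1 - r 0 - r 2 + c 1
  · linear_combination 2 * c2 - r 0 - r 1 + c 2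
  · linear_combination -2 * c0 - r 1 - r 2 + c 0
  · linear_combination -2 * c1 - r 0 - r 2 + c 1
  · linear_combination -2 * c2 - r 0 - r 1 + c 2

lemma quatSq_nonneg (hZ : SO3 Z) (i : Fin 4) : 0 ≤ quatSq Z i := by
  obtain ⟨p01, p02, p03, p23, p13, p12⟩ := hZ.quatSq_mul_quatSq
  have hsum := quatSq_sum Z
  match i with
  | 0 =>
    refine nonneg_of_mul_nonneg_of_add_pos (b := quatSq Z 1) (c := quatSq Z 2) (e := quatSq Z 3)
      ?_ ?_ ?_ (by linarith)
    all_goals simp only [p01, p02, p03]; positivity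
  | 1 =>
    refine nonneg_of_mul_nonneg_of_add_pos (b := quatSq Z 0) (c := quatSq Z 2) (e := quatSq Z 3)
      ?_ ?_ ?_ (by linarith)
    all_goals simp only [mul_comm (quatSq Z 1) (quatSq Z 0), p01, p12, p13]; positivity
  | 2 =>
    refine nonneg_of_mul_nonneg_of_add_pos (b := quatSq Z 0) (c := quatSq Z 1) (e := quatSq Z 3)
      ?_ ?_ ?_ (by linarith)
    all_goals
      simp only [mul_comm (quatSq Z 2) (quatSq Z 0), mul_comm (quatSq Z 2) (quatSq Z 1), p02, p12,
        p23]
      positivity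
  | 3 =>
    refine nonneg_of_mul_nonneg_of_add_pos (b := quatSq Z 0) (c := quatSq Z 1) (e := quatSq Z 2)
      ?_ ?_ ?_ (by linarith)
    all_goals simp only [mul_comm (quatSq Z 3), p03, p13, p23]; positivity

lemma fnorm_sub_one_sq (hZ : SO3 Z) : fnorm (Z - 1) ^ 2 = 2 * (4 - quatSq Z 0) := by
  have r := hZ.row_sq_sum
  rw [fnorm_sq]
  simp [Fin.sum_univ_three, one_apply, quatSq]
  linear_combination r 0 + r 1 + r 2

lemma vnorm_vee_sq (hZ : SO3 Z) (d : Fin 3 → ℝ) :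
    vnorm (vee (Zᵀ * diagonal d - diagonal d * Z)) ^ 2 = errorQuartic d (quatSq Z) := by
  obtain ⟨p01, p02, p03, p23, p13, p12⟩ := hZ.quatSq_mul_quatSq
  have r := hZ.row_sq_sum
  have c := hZ.col_sq_sum
  rw [errorQuartic, p01, p02, p03, p23, p13, p12, vnorm_sq]
  simp [vee, dotProduct, Fin.sum_univ_three, mul_apply, diagonal]
  linear_combination (1 / 2) * (d 1 ^ 2 - d 2 ^ 2) * (r 1 - c 1)
    - (1 / 2) * (d 2 ^ 2 - d 0 ^ 2) * (r 0 - c 0)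

theorem attitude_error_bounds (hZ : SO3 Z) {d : Fin 3 → ℝ} (hd : ∀ k, 0 ≤ d k) {c₁ c₂ : ℝ}
    (hc₁ : 0 ≤ c₁) (hpair : ∀ k, (∑ i, d i) - d k ∈ Set.Icc c₁ c₂) :
    (1 / 2) * c₁ ^ 2 * (1 - fnorm (Z - 1) ^ 2 / 8) * fnorm (Z - 1) ^ 2
        ≤ vnorm (vee (Zᵀ * diagonal d - diagonal d * Z)) ^ 2 ∧
      vnorm (vee (Zᵀ * diagonal d - diagonal d * Z)) ^ 2
        ≤ (1 / 2) * c₂ ^ 2 * fnorm (Z - 1) ^ 2 := by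
  rw [hZ.vnorm_vee_sq, hZ.fnorm_sub_one_sq]
  have hw := hZ.quatSq_nonneg
  have hsum := quatSq_sum Z
  constructor
  · calc _ = c₁ ^ 2 * quatSq Z 0 * (4 - quatSq Z 0) / 4 := by ring
      _ ≤ _ := le_errorQuartic hw hsum hc₁ fun k => (hpair k).1
  · calc _ ≤ c₂ ^ 2 * (4 - quatSq Z 0) := errorQuartic_le hw hsum hd fun k => (hpair k).2
      _ = _ := by ring

end SO3

/-- bounds on the attitude error vector `e_R = (RᵀG Rbar − RbarᵀG R)^∨`:
`½ c₁² (1 − ‖E_R‖²/8) ‖E_R‖² ≤ ‖e_R‖² ≤ ½ c₂² ‖E_R‖²` with `c₁ = λ₁+λ₂ = tr G − λ₃`,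
`c₂ = λ₂+λ₃ = tr G − λ₁`. -/
theorem stmt_6 (G : Matrix (Fin 3) (Fin 3) ℝ) (hG : G.PosSemidef)
    (l1 l2 l3 : ℝ) (h12 : l1 ≤ l2) (h23 : l2 ≤ l3)
    (hchar : G.charpoly = (X - C l1) * (X - C l2) * (X - C l3))
    (R Rbar : Matrix (Fin 3) (Fin 3) ℝ) (hR : SO3 R) (hRbar : SO3 Rbar)
    (c₁ c₂ : ℝ) (hc₁ : c₁ = l1 + l2) (hc₂ : c₂ = l2 + l3)
    (eR : Fin 3 → ℝ) (heR : eR = vee (Rᵀ * G * Rbar - Rbarᵀ * G * R)) :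
    (1 / 2) * c₁ ^ 2 * (1 - fnorm (R - Rbar) ^ 2 / 8) * fnorm (R - Rbar) ^ 2 ≤ vnorm eR ^ 2 ∧
    vnorm eR ^ 2 ≤ (1 / 2) * c₂ ^ 2 * fnorm (R - Rbar) ^ 2 := by
  set U : Matrix (Fin 3) (Fin 3) ℝ := (hG.1.eigenvectorUnitary : Matrix (Fin 3) (Fin 3) ℝ)
  set d := hG.1.eigenvalues
  have hd : ∀ k, 0 ≤ d k := hG.eigenvalues_nonneg
  have hroots : Multiset.map d Finset.univ.val = {l1, l2, l3} := by
    have h := hG.1.roots_charpoly_eq_eigenvalues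
    rw [hchar, roots_X_sub_C_mul_X_sub_C_mul_X_sub_C] at h
    simpa using h.symm
  have hsum : ∑ i, d i = l1 + l2 + l3 := by
    simpa [Fin.sum_univ_three, add_assoc] using congrArg Multiset.sum hroots
  have hl1 : 0 ≤ l1 := by
    obtain ⟨k, -, hk⟩ := Multiset.mem_map.mp
      (show l1 ∈ Multiset.map d Finset.univ.val by simp [hroots])
    exact hk ▸ hd k
  have hU : Uᵀ * U = 1 := hG.1.transpose_eigenvectorUnitary_mul_self
  have hUUt : U * Uᵀ = 1 := mul_eq_one_comm.mp hU
  have hP : (Uᵀ * Rbar) * (Uᵀ * Rbar)ᵀ = 1 := by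
    rw [transpose_mul, transpose_transpose, Matrix.mul_assoc,
      mul_mul_cancel_of_mul_eq_one hRbar.mul_transpose_s6, hU]
  set Z := Uᵀ * (R * Rbarᵀ) * U
  have hE : fnorm (R - Rbar) = fnorm (Z - 1) := by
    rw [sub_eq_conj_sub_one hUUt hRbar.1, fnorm_mul_orthogonal hP, fnorm_orthogonal_mul hU]
  have hK : (Zᵀ * diagonal d - diagonal d * Z)ᵀ = -(Zᵀ * diagonal d - diagonal d * Z) := by
    simp [transpose_mul, diagonal_transpose]
  have he : vnorm eR ^ 2 = vnorm (vee (Zᵀ * diagonal d - diagonal d * Z)) ^ 2 := by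
    rw [heR, hG.1.eq_eigenvectorUnitary_mul_diagonal_mul_transpose,
      transpose_mul_mul_sub_eq_conj hUUt hRbar.1, vnorm_vee_conj_sq hK hP]
  rw [hE, he]
  refine ((hR.mul_transpose_of hRbar).conj hU).attitude_error_bounds hd (by linarith) fun k => ?_
  have := mem_Icc_of_map_eq h12 h23 hroots k
  constructor <;> linarith [this.1, this.2]
end
end
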